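/- Let $v \in C^1([0,\rho_{\max}];\mathbb{R}^+)$ with $v' \leq 0$, let $(\gamma_k)_{k=0}^{N-1}$ be non-negative, non-increasing weights, and let $(\rho_j)_{j\in\mathbb{Z}} \subset [\rho_m, \rho_M] \subseteq [0,\rho_{\max}]$. Define $V_{j+1/2} = \sum_{k=0}^{N-1}\gamma_k v(\rho_{j+k+1})$. Then for all $j$: $V_{j-1/2} - V_{j+1/2} \leq \gamma_0 (v(\rho_j) - v(\rho_M)) \leq \gamma_0 \|v'\|_\infty (\rho_M - \rho_j)$. -/

import Mathlib

noncomputable def supAbs (f : ℝ → ℝ) (s : Set ℝ) : ℝ :=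
  sSup ((fun x => |f x|) '' s)

open Finset Set

/-- By Abel summation the sum is `γ₀ a₀ - ∑ (γₖ - γₖ₊₁) aₖ₊₁ - γ_{N-1} a_N`, where every `aₖ₊₁`
has a non-positive coefficient; replacing each by the lower bound `b` only increases it. -/
theorem sum_range_mul_sub_succ_le {N : ℕ} (hN : 1 ≤ N) {γ a : ℕ → ℝ} {b : ℝ}
    (hγ_nonneg : ∀ k < N, 0 ≤ γ k) (hγ_mono : ∀ k, k + 1 < N → γ (k + 1) ≤ γ k)
    (hb : ∀ k, b ≤ a k) :
    ∑ k ∈ range N, γ k * (a k - a (k + 1)) ≤ γ 0 * (a 0 - b) := by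
  obtain ⟨n, rfl⟩ : ∃ n, N = n + 1 := ⟨N - 1, by omega⟩
  clear hN
  induction n generalizing γ a with
  | zero =>
    simpa using mul_le_mul_of_nonneg_left (sub_le_sub_left (hb 1) (a 0)) (hγ_nonneg 0 one_pos)
  | succ n ih =>
    have htail : ∑ k ∈ range (n + 1), γ (k + 1) * (a (k + 1) - a (k + 1 + 1)) ≤
        γ 1 * (a 1 - b) :=
      ih (hγ_nonneg := fun k hk => hγ_nonneg (k + 1) (by omega))
        (hγ_mono := fun k hk => hγ_mono (k + 1) (by omega)) (hb := fun k => hb (k + 1))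
    have hγ₀ : 0 ≤ γ 0 := hγ_nonneg 0 (by omega)
    have hγ₁₀ : γ 1 ≤ γ 0 := hγ_mono 0 (by omega)
    rw [sum_range_succ']
    nlinarith [hb 1]

theorem abs_le_supAbs {f : ℝ → ℝ} {s : Set ℝ} (hs : IsCompact s) (hf : ContinuousOn f s)
    {x : ℝ} (hx : x ∈ s) : |f x| ≤ supAbs f s :=
  le_csSup (hs.image_of_continuousOn hf.abs).bddAbove ⟨x, hx, rfl⟩

theorem sub_le_supAbs_deriv_mul_sub {f f' : ℝ → ℝ} {a b x y : ℝ}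
    (hf : ∀ z ∈ Icc a b, HasDerivAt f (f' z) z) (hf' : ContinuousOn f' (Icc a b))
    (hx : x ∈ Icc a b) (hy : y ∈ Icc a b) (hxy : x ≤ y) :
    f x - f y ≤ supAbs f' (Icc a b) * (y - x) := by
  have hlip : ‖f x - f y‖ ≤ supAbs f' (Icc a b) * ‖x - y‖ :=
    (convex_Icc a b).norm_image_sub_le_of_norm_hasDerivWithin_le
      (fun z hz => (hf z hz).hasDerivWithinAt)
      (fun z hz => abs_le_supAbs isCompact_Icc hf' hz) hy hx
  rw [Real.norm_eq_abs, Real.norm_eq_abs, abs_sub_comm x, abs_of_nonneg (sub_nonneg.2 hxy)]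
    at hlip
  exact (le_abs_self _).trans hlip

theorem antitoneOn_Icc_of_hasDerivAt_nonpos {f f' : ℝ → ℝ} {a b : ℝ}
    (hf : ∀ x ∈ Icc a b, HasDerivAt f (f' x) x) (hf' : ∀ x ∈ Icc a b, f' x ≤ 0) :
    AntitoneOn f (Icc a b) :=
  antitoneOn_of_hasDerivWithinAt_nonpos (convex_Icc a b)
    (fun x hx => (hf x hx).continuousAt.continuousWithinAt)
    (fun x hx => (hf x (interior_subset hx)).hasDerivWithinAt)
    (fun x hx => hf' x (interior_subset hx))

theorem convolution_difference_upper_bound_general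
    (ρmax : ℝ)
    (v v' : ℝ → ℝ)
    (hv_deriv : ∀ x ∈ Set.Icc (0:ℝ) ρmax, HasDerivAt v (v' x) x)
    (hv'_cont : ContinuousOn v' (Set.Icc 0 ρmax))
    (hv'_nonpos : ∀ x ∈ Set.Icc (0:ℝ) ρmax, v' x ≤ 0)
    (N : ℕ) (hN : 1 ≤ N) (γ : ℕ → ℝ)
    (hγ_nonneg : ∀ k < N, 0 ≤ γ k)
    (hγ_mono : ∀ k, k + 1 < N → γ (k + 1) ≤ γ k)
    (ρm ρM : ℝ) (hρm : 0 ≤ ρm) (hρM : ρM ≤ ρmax)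
    (ρ : ℤ → ℝ) (hρ : ∀ j, ρ j ∈ Set.Icc ρm ρM)
    (V : ℤ → ℝ)
    (hV : ∀ j, V j = ∑ k ∈ Finset.range N, γ k * v (ρ (j + k + 1))) :
    ∀ j : ℤ, V (j - 1) - V j ≤ γ 0 * (v (ρ j) - v ρM) ∧
      γ 0 * (v (ρ j) - v ρM) ≤
        γ 0 * supAbs v' (Set.Icc 0 ρmax) * (ρM - ρ j) := by
  have hρ_mem : ∀ i, ρ i ∈ Icc 0 ρmax := fun i => ⟨hρm.trans (hρ i).1, (hρ i).2.trans hρM⟩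
  have hρM_mem : ρM ∈ Icc 0 ρmax := ⟨(hρ_mem 0).1.trans (hρ 0).2, hρM⟩
  have hv_ge : ∀ i, v ρM ≤ v (ρ i) := fun i =>
    antitoneOn_Icc_of_hasDerivAt_nonpos hv_deriv hv'_nonpos (hρ_mem i) hρM_mem (hρ i).2
  intro j
  have hV_diff : V (j - 1) - V j =
      ∑ k ∈ range N, γ k * (v (ρ (j + k)) - v (ρ (j + (k + 1 : ℕ)))) := by
    rw [hV, hV, ← sum_sub_distrib]
    refine sum_congr rfl fun k _ => ?_
    rw [show j - 1 + k + 1 = j + k by ring, Nat.cast_succ, ← add_assoc, mul_sub]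
  constructor
  · rw [hV_diff]
    simpa using sum_range_mul_sub_succ_le hN hγ_nonneg hγ_mono (fun k => hv_ge (j + k))
  · rw [mul_assoc]
    exact mul_le_mul_of_nonneg_left
      (sub_le_supAbs_deriv_mul_sub hv_deriv hv'_cont (hρ_mem j) hρM_mem (hρ j).2)
      (hγ_nonneg 0 hN)

theorem convolution_difference_upper_bound
    (ρmax : ℝ) (hρmax : 0 < ρmax)
    (v v' : ℝ → ℝ)
    (hv_deriv : ∀ x ∈ Set.Icc (0:ℝ) ρmax, HasDerivAt v (v' x) x)
    (hv'_cont : ContinuousOn v' (Set.Icc 0 ρmax))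
    (hv_nonneg : ∀ x ∈ Set.Icc (0:ℝ) ρmax, 0 ≤ v x)
    (hv'_nonpos : ∀ x ∈ Set.Icc (0:ℝ) ρmax, v' x ≤ 0)
    (N : ℕ) (hN : 1 ≤ N) (γ : ℕ → ℝ)
    (hγ_nonneg : ∀ k < N, 0 ≤ γ k)
    (hγ_mono : ∀ k, k + 1 < N → γ (k + 1) ≤ γ k)
    (ρm ρM : ℝ) (hρm : 0 ≤ ρm) (hρM : ρM ≤ ρmax)
    (ρ : ℤ → ℝ) (hρ : ∀ j, ρ j ∈ Set.Icc ρm ρM)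
    (V : ℤ → ℝ)
    (hV : ∀ j, V j = ∑ k ∈ Finset.range N, γ k * v (ρ (j + k + 1))) :
    ∀ j : ℤ, V (j - 1) - V j ≤ γ 0 * (v (ρ j) - v ρM) ∧
      γ 0 * (v (ρ j) - v ρM) ≤
        γ 0 * supAbs v' (Set.Icc 0 ρmax) * (ρM - ρ j) :=
  convolution_difference_upper_bound_general ρmax v v' hv_deriv hv'_cont hv'_nonpos N hN γ hγ_nonneg
    hγ_mono ρm ρM hρm hρM ρ hρ V hV
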